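/- Monotonicity under partial trace: for strictly positive ρ_AB, σ_AB on a bipartite system with partial traces ρ_A = Tr_B(ρ_AB), σ_A = Tr_B(σ_AB) also strictly positive, S_f(ρ_AB‖σ_AB) ≥ S_f(ρ_A‖σ_A) for any operator convex f defined on the relevant spectra. -/

import Mathlib

open Matrix Kronecker
open scoped ComplexOrder

noncomputable def applyFun {n : Type*} [Fintype n] [DecidableEq n]
    (f : ℝ → ℝ) (A : Matrix n n ℂ) : Matrix n n ℂ := by
  classical exact
    if hA : A.IsHermitian then
      (hA.eigenvectorUnitary : Matrix n n ℂ) *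
        Matrix.diagonal (fun i => (f (hA.eigenvalues i) : ℂ)) *
        (star (hA.eigenvectorUnitary : Matrix n n ℂ))
    else 0

noncomputable def msqrt {n : Type*} [Fintype n] [DecidableEq n]
    (A : Matrix n n ℂ) : Matrix n n ℂ := by
  classical exact if h : A.PosSemidef then
    (h.1.eigenvectorUnitary : Matrix n n ℂ) *
      Matrix.diagonal ((↑) ∘ (fun x : ℝ => Real.sqrt x) ∘ h.1.eigenvalues) *
      (star h.1.eigenvectorUnitary : Matrix n n ℂ) else 0

def vecOf {m n : Type*} (A : Matrix m n ℂ) : m × n → ℂ := fun p => A p.1 p.2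

noncomputable def Srel {n : Type*} [Fintype n] [DecidableEq n]
    (f : ℝ → ℝ) (ρ σ : Matrix n n ℂ) : ℝ :=
  (star (vecOf (msqrt ρ)) ⬝ᵥ (applyFun f (σ ⊗ₖ (ρ⁻¹)ᵀ) *ᵥ vecOf (msqrt ρ))).re

def OperatorConvexOn (I : Set ℝ) (f : ℝ → ℝ) : Prop :=
  ∀ (n : ℕ) (A B : Matrix (Fin n) (Fin n) ℂ) (hA : A.IsHermitian) (hB : B.IsHermitian),
    (∀ i, hA.eigenvalues i ∈ I) → (∀ i, hB.eigenvalues i ∈ I) →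
    ∀ lam : ℝ, 0 ≤ lam → lam ≤ 1 →
      ((lam : ℂ) • applyFun f A + ((1 - lam : ℝ) : ℂ) • applyFun f B -
        applyFun f ((lam : ℂ) • A + ((1 - lam : ℝ) : ℂ) • B)).PosSemidef

noncomputable def entf {n : Type*} [Fintype n] [DecidableEq n]
    (f : ℝ → ℝ) (ρ : Matrix n n ℂ) : ℝ :=
  -(Matrix.trace (ρ * applyFun f ρ⁻¹)).re

noncomputable def ptraceB {α β : Type*} [Fintype β]
    (M : Matrix (α × β) (α × β) ℂ) : Matrix α α ℂ :=
  Matrix.of fun i j => ∑ k, M (i, k) (j, k)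

noncomputable def ptraceA {α β : Type*} [Fintype α]
    (M : Matrix (α × β) (α × β) ℂ) : Matrix β β ℂ :=
  Matrix.of fun i j => ∑ k, M (k, i) (k, j)

def NonAffineOn (I : Set ℝ) (f : ℝ → ℝ) : Prop :=
  ¬ ∃ c b : ℝ, ∀ t ∈ I, f t = c * t + b

/-!
Write `R = √ρ_AB`, `s = √ρ_A`, and let `E` be the matrix of `X ↦ X ⊗ 1_B` in `vecOf` coordinates.
Then `V = (1 ⊗ Rᵀ) E (1 ⊗ s⁻ᵀ)` is an isometry with `V vec s = vec R` and
`V* (σ_AB ⊗ ρ_AB⁻ᵀ) V = σ_A ⊗ ρ_A⁻ᵀ`, so the inequality is the operator Jensen inequality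
`f(V* M V) ≤ V* f(M) V` evaluated at `vec s`.

Operator Jensen follows from midpoint operator convexity by the Hansen–Pedersen dilation:
`U = [[1 - VV*, V], [V*, 0]]` is a self-adjoint unitary, and for `A = U diag(M, 1) U` and the
reflection `S = diag(1, -1)` the midpoint of `A` and `SAS` is the block-diagonal part of `A`.
Since `f` commutes with unitary conjugation and with block-diagonal sums, comparing the lower
right corners of `(f(A) + f(SAS))/2 ≥ f((A + SAS)/2)` gives `V* f(M) V ≥ f(V* M V)`.
-/

section FunctionalCalculus

open Polynomial

variable {n m : Type*} [Fintype n] [DecidableEq n] [Fintype m] [DecidableEq m]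

lemma applyFun_eq_cfc (f : ℝ → ℝ) (A : Matrix n n ℂ) : applyFun f A = cfc f A := by
  by_cases hA : A.IsHermitian
  · rw [hA.cfc_eq, IsHermitian.cfc, Unitary.conjStarAlgAut_apply, applyFun, dif_pos hA]
    rfl
  · rw [applyFun, dif_neg hA]
    exact (cfc_apply_of_not_predicate (f := f) A hA).symm

lemma cfc_eq_aeval_interpolate {A : Matrix n n ℂ} (hA : A.IsHermitian) (f : ℝ → ℝ)
    {s : Finset ℝ} (hs : ∀ i, hA.eigenvalues i ∈ s) :
    cfc f A = aeval A (Lagrange.interpolate s id f) := by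
  rw [← cfc_polynomial _ A hA]
  refine cfc_congr fun x hx => ?_
  obtain ⟨i, rfl⟩ := hA.spectrum_real_eq_range_eigenvalues ▸ hx
  exact (Lagrange.eval_interpolate_at_node f (Set.injOn_id _) (hs i)).symm

lemma cfc_map_algHom (φ : Matrix n n ℂ →ₐ[ℝ] Matrix m m ℂ) {A : Matrix n n ℂ}
    (hA : A.IsHermitian) (hφA : (φ A).IsHermitian) (f : ℝ → ℝ) :
    cfc f (φ A) = φ (cfc f A) := by
  classical
  let s := Finset.univ.image hA.eigenvalues ∪ Finset.univ.image hφA.eigenvalues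
  rw [cfc_eq_aeval_interpolate hA f (s := s) (fun i => by simp [s]),
    cfc_eq_aeval_interpolate hφA f (s := s) (fun i => by simp [s]), aeval_algHom_apply]

lemma cfc_unitary_conj {u : Matrix n n ℂ} (hu : u ∈ unitary (Matrix n n ℂ)) {A : Matrix n n ℂ}
    (hA : A.IsHermitian) (f : ℝ → ℝ) :
    cfc f (u * A * star u) = u * cfc f A * star u :=
  cfc_map_algHom (Unitary.conjStarAlgAut ℝ _ ⟨u, hu⟩).toAlgEquiv.toAlgHom hA
    (isHermitian_mul_mul_conjTranspose u hA) f

lemma cfc_reindex (e : n ≃ m) {A : Matrix n n ℂ} (hA : A.IsHermitian) (f : ℝ → ℝ) :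
    cfc f (reindex e e A) = reindex e e (cfc f A) :=
  cfc_map_algHom (reindexAlgEquiv ℝ ℂ e).toAlgHom hA (hA.submatrix _) f

lemma aeval_fromBlocks_zero (A : Matrix n n ℂ) (B : Matrix m m ℂ) (p : ℝ[X]) :
    aeval (fromBlocks A 0 0 B) p = fromBlocks (aeval A p) 0 0 (aeval B p) := by
  induction p using Polynomial.induction_on' with
  | add p q hp hq => simp only [map_add, hp, hq, fromBlocks_add, add_zero]
  | monomial k a =>
    simp only [aeval_monomial, Algebra.algebraMap_eq_smul_one, smul_mul_assoc, one_mul,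
      fromBlocks_diagonal_pow, fromBlocks_smul, smul_zero]

lemma cfc_fromBlocks_zero {A : Matrix n n ℂ} {B : Matrix m m ℂ} (hA : A.IsHermitian)
    (hB : B.IsHermitian) (f : ℝ → ℝ) :
    cfc f (fromBlocks A 0 0 B) = fromBlocks (cfc f A) 0 0 (cfc f B) := by
  classical
  have hAB : (fromBlocks A 0 0 B).IsHermitian := hA.fromBlocks (by simp) hB
  let s := Finset.univ.image hA.eigenvalues ∪ Finset.univ.image hB.eigenvalues ∪
    Finset.univ.image hAB.eigenvalues
  rw [cfc_eq_aeval_interpolate hA f (s := s) (fun i => by simp [s]),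
    cfc_eq_aeval_interpolate hB f (s := s) (fun i => by simp [s]),
    cfc_eq_aeval_interpolate hAB f (s := s) (fun i => by simp [s]), aeval_fromBlocks_zero]

lemma OperatorConvexOn.posSemidef_cfc {f : ℝ → ℝ} (hf : OperatorConvexOn (Set.Ioi 0) f)
    {A B : Matrix n n ℂ} (hA : A.PosDef) (hB : B.PosDef) {t : ℝ} (ht₀ : 0 ≤ t) (ht₁ : t ≤ 1) :
    (t • cfc f A + (1 - t) • cfc f B - cfc f (t • A + (1 - t) • B)).PosSemidef := by
  let e := Fintype.equivFin n
  have hA' := hA.submatrix e.symm.injective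
  have hB' := hB.submatrix e.symm.injective
  have h := hf _ (reindex e e A) (reindex e e B) hA'.1 hB'.1 hA'.eigenvalues_pos
    hB'.eigenvalues_pos t ht₀ ht₁
  simp only [applyFun_eq_cfc, Complex.coe_smul] at h
  have hAB : (t • A + (1 - t) • B).IsHermitian :=
    (hA.1.smul (.all t)).add (hB.1.smul (.all _))
  have hmix : ∀ X Y : Matrix n n ℂ,
      t • reindex e e X + (1 - t) • reindex e e Y = reindex e e (t • X + (1 - t) • Y) :=
    fun X Y => rfl
  rw [hmix, cfc_reindex e hA.1, cfc_reindex e hB.1, cfc_reindex e hAB, hmix] at h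
  exact (posSemidef_submatrix_equiv e.symm).mp h

end FunctionalCalculus

section SquareRoot

variable {n : Type*} [Fintype n] [DecidableEq n]

lemma msqrt_eq_cfc {A : Matrix n n ℂ} (hA : A.PosSemidef) : msqrt A = cfc Real.sqrt A := by
  rw [hA.1.cfc_eq, IsHermitian.cfc, Unitary.conjStarAlgAut_apply, msqrt, dif_pos hA]
  rfl

lemma isHermitian_msqrt {A : Matrix n n ℂ} (hA : A.PosSemidef) : (msqrt A).IsHermitian := by
  rw [msqrt_eq_cfc hA]
  exact cfc_predicate Real.sqrt A

lemma msqrt_mul_self {A : Matrix n n ℂ} (hA : A.PosSemidef) : msqrt A * msqrt A = A := by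
  rw [msqrt_eq_cfc hA, ← cfc_mul Real.sqrt Real.sqrt A]
  conv_rhs => rw [← cfc_id' ℝ A (ha := hA.1)]
  refine cfc_congr fun x hx => ?_
  obtain ⟨i, rfl⟩ := hA.1.spectrum_real_eq_range_eigenvalues ▸ hx
  exact Real.mul_self_sqrt (hA.eigenvalues_nonneg i)

lemma isUnit_det_msqrt {A : Matrix n n ℂ} (hA : A.PosDef) : IsUnit (msqrt A).det := by
  refine isUnit_of_mul_isUnit_left (y := (msqrt A).det) ?_
  rw [← det_mul, msqrt_mul_self hA.posSemidef]
  exact (isUnit_iff_isUnit_det A).mp hA.isUnit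

end SquareRoot

section Dilation

variable {K H : Type*} [Fintype K] [DecidableEq K] [Fintype H] [DecidableEq H]

lemma Matrix.PosDef.fromBlocks_zero {A : Matrix K K ℂ} {B : Matrix H H ℂ} (hA : A.PosDef)
    (hB : B.PosDef) : (fromBlocks A 0 0 B).PosDef := by
  have := hA.isUnit.invertible
  have hpsd : (fromBlocks A 0 0ᴴ B).PosSemidef :=
    (hA.fromBlocks₁₁ 0 B).mpr (by simpa using hB.posSemidef)
  rw [conjTranspose_zero] at hpsd
  exact hpsd.posDef_iff_isUnit.mpr (isUnit_fromBlocks_zero₂₁.mpr ⟨hA.isUnit, hB.isUnit⟩)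

def isometryDilation (V : Matrix K H ℂ) : Matrix (K ⊕ H) (K ⊕ H) ℂ :=
  fromBlocks (1 - V * Vᴴ) V Vᴴ 0

lemma isometryDilation_mem_unitary {V : Matrix K H ℂ} (hV : Vᴴ * V = 1) :
    isometryDilation V ∈ unitary (Matrix (K ⊕ H) (K ⊕ H) ℂ) := by
  have hself : star (isometryDilation V) = isometryDilation V := by
    simp [isometryDilation, star_eq_conjTranspose, fromBlocks_conjTranspose]
  have hsq : isometryDilation V * isometryDilation V = 1 := by
    have hVV : V * Vᴴ * V = V := by rw [Matrix.mul_assoc, hV, Matrix.mul_one]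
    simp only [isometryDilation, fromBlocks_multiply, ← fromBlocks_one]
    congr 1 <;> simp [Matrix.sub_mul, Matrix.mul_sub, ← Matrix.mul_assoc, hV, hVV]
  rw [Unitary.mem_iff, hself]
  exact ⟨hsq, hsq⟩

lemma toBlocks₂₂_isometryDilation_conj (V : Matrix K H ℂ) (X : Matrix K K ℂ) (Y : Matrix H H ℂ) :
    (isometryDilation V * fromBlocks X 0 0 Y * star (isometryDilation V)).toBlocks₂₂ =
      Vᴴ * X * V := by
  simp [isometryDilation, star_eq_conjTranspose, fromBlocks_conjTranspose, fromBlocks_multiply]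

def blockReflection (K H : Type*) [DecidableEq K] [DecidableEq H] :
    Matrix (K ⊕ H) (K ⊕ H) ℂ :=
  fromBlocks 1 0 0 (-1)

lemma blockReflection_mem_unitary : blockReflection K H ∈ unitary (Matrix (K ⊕ H) (K ⊕ H) ℂ) := by
  have hself : star (blockReflection K H) = blockReflection K H := by
    simp [blockReflection, star_eq_conjTranspose, fromBlocks_conjTranspose]
  have hsq : blockReflection K H * blockReflection K H = 1 := by
    simp [blockReflection, fromBlocks_multiply]
  rw [Unitary.mem_iff, hself]
  exact ⟨hsq, hsq⟩

lemma inv_two_smul_add_blockReflection_conj (X : Matrix (K ⊕ H) (K ⊕ H) ℂ) :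
    (2⁻¹ : ℝ) • X + (2⁻¹ : ℝ) • (blockReflection K H * X * star (blockReflection K H)) =
      fromBlocks X.toBlocks₁₁ 0 0 X.toBlocks₂₂ := by
  conv_lhs => rw [← fromBlocks_toBlocks X]
  simp only [blockReflection, star_eq_conjTranspose, fromBlocks_conjTranspose, fromBlocks_multiply,
    fromBlocks_smul, fromBlocks_add]
  congr 1 <;> norm_num [← add_smul]

end Dilation

theorem OperatorConvexOn.posSemidef_isometry_conj {f : ℝ → ℝ}
    (hf : OperatorConvexOn (Set.Ioi 0) f) {K H : Type*} [Fintype K] [DecidableEq K] [Fintype H]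
    [DecidableEq H] {M : Matrix K K ℂ} (hM : M.PosDef) {V : Matrix K H ℂ} (hV : Vᴴ * V = 1) :
    (Vᴴ * cfc f M * V - cfc f (Vᴴ * M * V)).PosSemidef := by
  set U := isometryDilation V
  set S := blockReflection K H
  have hU : U ∈ unitary _ := isometryDilation_mem_unitary hV
  have hS : S ∈ unitary _ := blockReflection_mem_unitary
  have hT : (fromBlocks M 0 0 (1 : Matrix H H ℂ)).PosDef := hM.fromBlocks_zero .one
  have hA : (U * fromBlocks M 0 0 1 * star U).PosDef :=
    (IsUnit.posDef_star_right_conjugate_iff (Unitary.isUnit_coe (U := ⟨_, hU⟩))).mpr hT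
  set A := U * fromBlocks M 0 0 1 * star U
  have hSA : (S * A * star S).PosDef :=
    (IsUnit.posDef_star_right_conjugate_iff (Unitary.isUnit_coe (U := ⟨_, hS⟩))).mpr hA
  have hA₁₁ : A.toBlocks₁₁.IsHermitian := hA.1.submatrix Sum.inl
  have hA₂₂ : A.toBlocks₂₂.IsHermitian := hA.1.submatrix Sum.inr
  have h := hf.posSemidef_cfc hA hSA (t := 2⁻¹) (by norm_num) (by norm_num)
  rw [cfc_unitary_conj hS hA.1, show (1 : ℝ) - 2⁻¹ = 2⁻¹ by norm_num,
    inv_two_smul_add_blockReflection_conj, inv_two_smul_add_blockReflection_conj,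
    cfc_fromBlocks_zero hA₁₁ hA₂₂] at h
  have hcorner : ((cfc f A).toBlocks₂₂ - cfc f A.toBlocks₂₂).PosSemidef := h.submatrix Sum.inr
  rwa [cfc_unitary_conj hU hT.1, cfc_fromBlocks_zero hM.1 isHermitian_one,
    toBlocks₂₂_isometryDilation_conj, toBlocks₂₂_isometryDilation_conj] at hcorner

theorem Srel_le_of_isometry {f : ℝ → ℝ} (hf : OperatorConvexOn (Set.Ioi 0) f)
    {m n : Type*} [Fintype m] [DecidableEq m] [Fintype n] [DecidableEq n]
    {ρ σ : Matrix n n ℂ} {ρ' σ' : Matrix m m ℂ} (hM : (σ ⊗ₖ ρ⁻¹ᵀ).PosDef)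
    {V : Matrix (n × n) (m × m) ℂ} (hV : Vᴴ * V = 1)
    (hVM : Vᴴ * (σ ⊗ₖ ρ⁻¹ᵀ) * V = σ' ⊗ₖ ρ'⁻¹ᵀ)
    (hVv : V *ᵥ vecOf (msqrt ρ') = vecOf (msqrt ρ)) :
    Srel f ρ' σ' ≤ Srel f ρ σ := by
  set x := vecOf (msqrt ρ')
  have hquad : ∀ F, star x ⬝ᵥ ((Vᴴ * F * V) *ᵥ x) = star (V *ᵥ x) ⬝ᵥ (F *ᵥ (V *ᵥ x)) := by
    intro F
    rw [star_mulVec, ← dotProduct_mulVec, mulVec_mulVec, mulVec_mulVec, Matrix.mul_assoc]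
  have h := (hf.posSemidef_isometry_conj hM hV).dotProduct_mulVec_nonneg x
  rw [hVM, sub_mulVec, dotProduct_sub, sub_nonneg, hquad, hVv] at h
  simp only [Srel, applyFun_eq_cfc]
  exact (Complex.le_def.mp h).1

lemma kronecker_transpose_mulVec_vecOf {l m n p : Type*} [Fintype m] [Fintype n]
    (M : Matrix l m ℂ) (N : Matrix n p ℂ) (X : Matrix m n ℂ) :
    (M ⊗ₖ Nᵀ) *ᵥ vecOf X = vecOf (M * X * N) := by
  change (M ⊗ₖ Nᵀ) *ᵥ vec Xᵀ = vec (M * X * N)ᵀ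
  rw [kronecker_mulVec_vec, transpose_mul, transpose_mul, Matrix.mul_assoc]

lemma one_kronecker_mul_kronecker_mul_one_kronecker {m n : Type*} [Fintype m] [DecidableEq m]
    [Fintype n] (X Y : Matrix n n ℂ) (S : Matrix m m ℂ) :
    ((1 : Matrix m m ℂ) ⊗ₖ X) * (S ⊗ₖ Y) * ((1 : Matrix m m ℂ) ⊗ₖ X) = S ⊗ₖ (X * Y * X) := by
  rw [← mul_kronecker_mul, ← mul_kronecker_mul, Matrix.one_mul, Matrix.mul_one]

lemma ptraceB_transpose {α β : Type*} [Fintype β] (N : Matrix (α × β) (α × β) ℂ) :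
    ptraceB Nᵀ = (ptraceB N)ᵀ :=
  rfl

section PartialTrace

variable {α β : Type*} [Fintype α] [DecidableEq α] [DecidableEq β]

def ampliationMatrix (α β : Type*) [DecidableEq α] [DecidableEq β] :
    Matrix ((α × β) × (α × β)) (α × α) ℂ :=
  of fun p q => if p.1.1 = q.1 ∧ p.2.1 = q.2 ∧ p.1.2 = p.2.2 then 1 else 0

lemma ampliationMatrix_mulVec_vecOf (X : Matrix α α ℂ) :
    ampliationMatrix α β *ᵥ vecOf X = vecOf (X ⊗ₖ (1 : Matrix β β ℂ)) := by
  ext ⟨⟨a, b⟩, ⟨a', b'⟩⟩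
  simp [mulVec, dotProduct, ampliationMatrix, vecOf, Fintype.sum_prod_type, one_apply, ite_and]

variable [Fintype β]

lemma conjTranspose_ampliationMatrix_mul_kronecker_one_mul (N : Matrix (α × β) (α × β) ℂ) :
    (ampliationMatrix α β)ᴴ * (N ⊗ₖ (1 : Matrix (α × β) (α × β) ℂ)) * ampliationMatrix α β =
      ptraceB N ⊗ₖ (1 : Matrix α α ℂ) := by
  ext ⟨x, y⟩ ⟨x', y'⟩
  simp [mul_apply, ampliationMatrix, Fintype.sum_prod_type, one_apply, ite_and, ptraceB, eq_comm,
    apply_ite (starRingEnd ℂ)]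

lemma conjTranspose_ampliationMatrix_mul_one_kronecker_mul (N : Matrix (α × β) (α × β) ℂ) :
    (ampliationMatrix α β)ᴴ * ((1 : Matrix (α × β) (α × β) ℂ) ⊗ₖ N) * ampliationMatrix α β =
      (1 : Matrix α α ℂ) ⊗ₖ ptraceB N := by
  ext ⟨x, y⟩ ⟨x', y'⟩
  simp [mul_apply, ampliationMatrix, Fintype.sum_prod_type, one_apply, ite_and, ptraceB, eq_comm,
    apply_ite (starRingEnd ℂ)]

noncomputable def ptraceIsometry (ρ : Matrix (α × β) (α × β) ℂ) :
    Matrix ((α × β) × (α × β)) (α × α) ℂ :=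
  ((1 : Matrix (α × β) (α × β) ℂ) ⊗ₖ (msqrt ρ)ᵀ) * ampliationMatrix α β *
    ((1 : Matrix α α ℂ) ⊗ₖ (msqrt (ptraceB ρ))⁻¹ᵀ)

variable {ρ : Matrix (α × β) (α × β) ℂ}

lemma ptraceIsometry_mulVec_vecOf (hρA : (ptraceB ρ).PosDef) :
    ptraceIsometry ρ *ᵥ vecOf (msqrt (ptraceB ρ)) = vecOf (msqrt ρ) := by
  rw [ptraceIsometry, ← mulVec_mulVec, ← mulVec_mulVec, kronecker_transpose_mulVec_vecOf,
    Matrix.one_mul, mul_nonsing_inv _ (isUnit_det_msqrt hρA), ampliationMatrix_mulVec_vecOf,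
    one_kronecker_one, kronecker_transpose_mulVec_vecOf, Matrix.one_mul, Matrix.one_mul]

lemma conjTranspose_ptraceIsometry_mul_mul (hρ : ρ.PosSemidef) (hρA : (ptraceB ρ).PosSemidef)
    (X : Matrix ((α × β) × (α × β)) ((α × β) × (α × β)) ℂ) :
    (ptraceIsometry ρ)ᴴ * X * ptraceIsometry ρ =
      ((1 : Matrix α α ℂ) ⊗ₖ (msqrt (ptraceB ρ))⁻¹ᵀ) *
        ((ampliationMatrix α β)ᴴ * (((1 : Matrix (α × β) (α × β) ℂ) ⊗ₖ (msqrt ρ)ᵀ) * X *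
          ((1 : Matrix (α × β) (α × β) ℂ) ⊗ₖ (msqrt ρ)ᵀ)) * ampliationMatrix α β) *
        ((1 : Matrix α α ℂ) ⊗ₖ (msqrt (ptraceB ρ))⁻¹ᵀ) := by
  have hR := (isHermitian_msqrt hρ).transpose
  have hs := ((isHermitian_msqrt hρA).inv).transpose
  simp only [ptraceIsometry, conjTranspose_mul, conjTranspose_kronecker, conjTranspose_one,
    hR.eq, hs.eq, Matrix.mul_assoc]

lemma conjTranspose_ptraceIsometry_mul_self (hρ : ρ.PosDef) (hρA : (ptraceB ρ).PosDef) :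
    (ptraceIsometry ρ)ᴴ * ptraceIsometry ρ = 1 := by
  rw [← Matrix.mul_one (ptraceIsometry ρ)ᴴ, conjTranspose_ptraceIsometry_mul_mul hρ.posSemidef
    hρA.posSemidef, Matrix.mul_one, ← mul_kronecker_mul, Matrix.one_mul, ← transpose_mul,
    msqrt_mul_self hρ.posSemidef, conjTranspose_ampliationMatrix_mul_one_kronecker_mul,
    ptraceB_transpose, one_kronecker_mul_kronecker_mul_one_kronecker, ← transpose_mul,
    ← transpose_mul]
  have hs := isUnit_det_msqrt hρA
  have hss := msqrt_mul_self hρA.posSemidef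
  set s := msqrt (ptraceB ρ)
  rw [← hss, Matrix.mul_assoc s, mul_nonsing_inv _ hs, Matrix.mul_one, nonsing_inv_mul _ hs,
    transpose_one, one_kronecker_one]

lemma conjTranspose_ptraceIsometry_mul_kronecker_mul (hρ : ρ.PosDef) (hρA : (ptraceB ρ).PosDef)
    (σ : Matrix (α × β) (α × β) ℂ) :
    (ptraceIsometry ρ)ᴴ * (σ ⊗ₖ ρ⁻¹ᵀ) * ptraceIsometry ρ = ptraceB σ ⊗ₖ (ptraceB ρ)⁻¹ᵀ := by
  rw [conjTranspose_ptraceIsometry_mul_mul hρ.posSemidef hρA.posSemidef,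
    one_kronecker_mul_kronecker_mul_one_kronecker, ← transpose_mul, ← transpose_mul]
  have hR := isUnit_det_msqrt hρ
  have hRR := msqrt_mul_self hρ.posSemidef
  have hss := msqrt_mul_self hρA.posSemidef
  set R := msqrt ρ
  set s := msqrt (ptraceB ρ)
  have hRρR : R * (ρ⁻¹ * R) = 1 := by
    rw [← hRR, Matrix.mul_inv_rev, Matrix.mul_assoc, nonsing_inv_mul _ hR, Matrix.mul_one,
      mul_nonsing_inv _ hR]
  rw [hRρR, transpose_one, conjTranspose_ampliationMatrix_mul_kronecker_one_mul,
    one_kronecker_mul_kronecker_mul_one_kronecker, Matrix.mul_one, ← transpose_mul, ← hss,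
    Matrix.mul_inv_rev]

end PartialTrace

theorem Srel_monotone_partialTrace_general {dA dB : ℕ} (f : ℝ → ℝ)
    (hf : OperatorConvexOn (Set.Ioi 0) f)
    (ρAB σAB : Matrix (Fin dA × Fin dB) (Fin dA × Fin dB) ℂ)
    (hρ : ρAB.PosDef) (hσ : σAB.PosDef)
    (hρA : (ptraceB ρAB).PosDef) :
    Srel f (ptraceB ρAB) (ptraceB σAB) ≤ Srel f ρAB σAB :=
  Srel_le_of_isometry hf (hσ.kronecker hρ.inv.transpose)
    (conjTranspose_ptraceIsometry_mul_self hρ hρA)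
    (conjTranspose_ptraceIsometry_mul_kronecker_mul hρ hρA σAB)
    (ptraceIsometry_mulVec_vecOf hρA)

/-- monotonicity of the quantum f-relative entropy under partial trace. -/
theorem Srel_monotone_partialTrace {dA dB : ℕ} (f : ℝ → ℝ)
    (hf : OperatorConvexOn (Set.Ioi 0) f)
    (ρAB σAB : Matrix (Fin dA × Fin dB) (Fin dA × Fin dB) ℂ)
    (hρ : ρAB.PosDef) (hσ : σAB.PosDef)
    (hρA : (ptraceB ρAB).PosDef) (hσA : (ptraceB σAB).PosDef) :
    Srel f (ptraceB ρAB) (ptraceB σAB) ≤ Srel f ρAB σAB :=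
  Srel_monotone_partialTrace_general f hf ρAB σAB hρ hσ hρA
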